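/- arXiv:1907.12962 — 3 statements merged into one kernel-verified Lean document; each statement's English description precedes it below -/
import Mathlib

section
/- Define the critical reaction rate β_c(p, ℓ) := ((2p − 1)/ℓ)·ln( p/(1−p) ). Then for every fixed ℓ > 0, the speed at criticality satisfies lim_{p→1⁻} c*(β_c(p, ℓ), p, ℓ) = 1; that is, if the reaction rate is maintained at the critical value β_c, the wave speed on the constant-degree tree converges to 1 as the degree d = 1/(1−p) tends to infinity. -/
open Real Set Filter

/-- `γ(λ) = e^{ℓ√(2λ)}`. -/
noncomputable def treeGamma (ℓ lam : ℝ) : ℝ := Real.exp (ℓ * Real.sqrt (2 * lam))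

/-- The constant-`(d,ℓ)` tree speed function
`c*(β,p,ℓ) = inf_{λ ≥ 0} (λ+β)/(√(2λ) + (1/ℓ)·ln(4p/(1+γ(λ)² − √((γ(λ)²−1)² + 4(2p−1)²γ(λ)²))))`. -/
noncomputable def cstarConst (β p ℓ : ℝ) : ℝ :=
  sInf ((fun lam : ℝ => (lam + β) /
    (Real.sqrt (2 * lam) + (1 / ℓ) * Real.log (4 * p /
      (1 + treeGamma ℓ lam ^ 2 -
        Real.sqrt ((treeGamma ℓ lam ^ 2 - 1) ^ 2 +
          4 * (2 * p - 1) ^ 2 * treeGamma ℓ lam ^ 2))))) '' Set.Ici 0)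

/-- The critical reaction rate `β_c(p,ℓ) = ((2p−1)/ℓ)·ln(p/(1−p))` for the
constant-`(d,ℓ)` tree. -/
noncomputable def betaCrit (p ℓ : ℝ) : ℝ := ((2 * p - 1) / ℓ) * Real.log (p / (1 - p))

/-- Auxiliary: `A(p) = log(p/(1−p))/ℓ`. -/
noncomputable def Afun (p ℓ : ℝ) : ℝ := Real.log (p / (1 - p)) / ℓ

/-- Auxiliary lower bound for the infimum: `m = √(A² + 2(2p−1)A) − A`. -/
noncomputable def mFun (p ℓ : ℝ) : ℝ :=
  Real.sqrt (Afun p ℓ ^ 2 + 2 * (2 * p - 1) * Afun p ℓ) - Afun p ℓ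

lemma Afun_pos {p ℓ : ℝ} (hℓ : 0 < ℓ) (hp : p ∈ Set.Ioo (1/2 : ℝ) 1) : 0 < Afun p ℓ := by
  obtain ⟨hp1, hp2⟩ := hp
  have h1 : (1 : ℝ) < p / (1 - p) := (one_lt_div (by linarith)).mpr (by linarith)
  exact div_pos (Real.log_pos h1) hℓ

/-- Key abstract quadratic fact: `(m+A)² = A² + 2cA` for `m = √(A²+2cA) − A`. -/
lemma sqm_sq {c A : ℝ} (hc0 : 0 < c) (hA0 : 0 < A) :
    (Real.sqrt (A ^ 2 + 2 * c * A) - A + A) ^ 2 = A ^ 2 + 2 * c * A := by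
  rw [sub_add_cancel, Real.sq_sqrt (by nlinarith)]

lemma sqm_nonneg {c A : ℝ} (hc0 : 0 < c) (hA0 : 0 < A) :
    0 ≤ Real.sqrt (A ^ 2 + 2 * c * A) - A := by
  have h := Real.sqrt_le_sqrt (show A ^ 2 ≤ A ^ 2 + 2 * c * A by nlinarith)
  rw [Real.sqrt_sq hA0.le] at h
  linarith

lemma sqm_le {c A : ℝ} (hc0 : 0 < c) (hA0 : 0 < A) :
    Real.sqrt (A ^ 2 + 2 * c * A) - A ≤ c := by
  have h1 : A ^ 2 + 2 * c * A ≤ (A + c) ^ 2 := by nlinarith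
  have h := Real.sqrt_le_sqrt h1
  rw [Real.sqrt_sq (by linarith)] at h
  linarith

/-- Abstract division lower bound. -/
lemma div_lb {c A lam den : ℝ} (hc0 : 0 < c) (hA0 : 0 < A) (hlam : 0 ≤ lam)
    (hden0 : 0 < den) (hdenle : den ≤ Real.sqrt (2 * lam) + A) :
    Real.sqrt (A ^ 2 + 2 * c * A) - A ≤ (lam + c * A) / den := by
  have hs0 : 0 ≤ Real.sqrt (2 * lam) := Real.sqrt_nonneg _
  have hs2 : Real.sqrt (2 * lam) ^ 2 = 2 * lam := Real.sq_sqrt (by linarith)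
  have hm := sqm_sq hc0 hA0
  have hm0 := sqm_nonneg hc0 hA0
  have hnum : 0 < lam + c * A := by nlinarith
  have step2 : Real.sqrt (A ^ 2 + 2 * c * A) - A ≤ (lam + c * A) / (Real.sqrt (2 * lam) + A) := by
    rw [le_div_iff₀ (by linarith)]
    nlinarith [sq_nonneg (Real.sqrt (2 * lam) - (Real.sqrt (A ^ 2 + 2 * c * A) - A))]
  have step1 : (lam + c * A) / (Real.sqrt (2 * lam) + A) ≤ (lam + c * A) / den :=
    div_le_div_of_nonneg_left hnum.le hden0 hdenle
  linarith

/-- Pointwise lower bound: every element of the image is at least `mFun p ℓ`. -/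
lemma pointwise_lb {p ℓ : ℝ} (hℓ : 0 < ℓ) (hp : p ∈ Set.Ioo (1/2 : ℝ) 1)
    {lam : ℝ} (hlam : 0 ≤ lam) :
    mFun p ℓ ≤ (lam + betaCrit p ℓ) /
    (Real.sqrt (2 * lam) + (1 / ℓ) * Real.log (4 * p /
      (1 + treeGamma ℓ lam ^ 2 -
        Real.sqrt ((treeGamma ℓ lam ^ 2 - 1) ^ 2 +
          4 * (2 * p - 1) ^ 2 * treeGamma ℓ lam ^ 2)))) := by
  obtain ⟨hp1, hp2⟩ := hp
  have hc0 : (0:ℝ) < 2 * p - 1 := by linarith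
  have hc1 : (2:ℝ) * p - 1 < 1 := by linarith
  have hA0 : 0 < Afun p ℓ := Afun_pos hℓ ⟨hp1, hp2⟩
  have hL0 : 0 < Real.log (p / (1 - p)) :=
    Real.log_pos ((one_lt_div (by linarith)).mpr (by linarith))
  have hg1 : 1 ≤ treeGamma ℓ lam ^ 2 := by
    have h1 : (1 : ℝ) ≤ treeGamma ℓ lam :=
      Real.one_le_exp (mul_nonneg hℓ.le (Real.sqrt_nonneg _))
    nlinarith
  generalize hgdef : treeGamma ℓ lam ^ 2 = g at *
  have hR1 : g - 1 ≤ Real.sqrt ((g - 1) ^ 2 + 4 * (2 * p - 1) ^ 2 * g) := by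
    have h1 : (g - 1) ^ 2 ≤ (g - 1) ^ 2 + 4 * (2 * p - 1) ^ 2 * g := by nlinarith
    have h2 := Real.sqrt_le_sqrt h1
    rwa [Real.sqrt_sq (by linarith)] at h2
  have hR2 : Real.sqrt ((g - 1) ^ 2 + 4 * (2 * p - 1) ^ 2 * g) ≤ g + (4 * p - 3) := by
    have h1 : (g - 1) ^ 2 + 4 * (2 * p - 1) ^ 2 * g ≤ (g + (4 * p - 3)) ^ 2 := by
      nlinarith [mul_nonneg (mul_nonneg hc0.le (by linarith : (0:ℝ) ≤ 1 - (2 * p - 1)))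
        (by linarith : (0:ℝ) ≤ g - 1)]
    have h2 := Real.sqrt_le_sqrt h1
    rwa [Real.sqrt_sq (by nlinarith)] at h2
  generalize hRdef : Real.sqrt ((g - 1) ^ 2 + 4 * (2 * p - 1) ^ 2 * g) = R at *
  have hD1 : 4 * (1 - p) ≤ 1 + g - R := by linarith
  have hD2 : 1 + g - R ≤ 2 := by linarith
  have hD0 : 0 < 1 + g - R := by linarith
  have hQ1 : 1 < 4 * p / (1 + g - R) := by
    rw [lt_div_iff₀ hD0]; nlinarith
  have hlogpos : 0 < Real.log (4 * p / (1 + g - R)) := Real.log_pos hQ1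
  have hQ : 4 * p / (1 + g - R) ≤ p / (1 - p) := by
    rw [div_le_div_iff₀ hD0 (by linarith)]; nlinarith
  have hlogL : Real.log (4 * p / (1 + g - R)) ≤ Real.log (p / (1 - p)) :=
    Real.log_le_log (by linarith) hQ
  have hden0 : 0 < Real.sqrt (2 * lam) + (1 / ℓ) * Real.log (4 * p / (1 + g - R)) := by
    have h1 : 0 < (1 / ℓ) * Real.log (4 * p / (1 + g - R)) := by positivity
    have h2 := Real.sqrt_nonneg (2 * lam)
    linarith
  have hdenle : Real.sqrt (2 * lam) + (1 / ℓ) * Real.log (4 * p / (1 + g - R))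
      ≤ Real.sqrt (2 * lam) + Afun p ℓ := by
    have h1 : (1 / ℓ) * Real.log (4 * p / (1 + g - R)) ≤ (1 / ℓ) * Real.log (p / (1 - p)) :=
      mul_le_mul_of_nonneg_left hlogL (by positivity)
    have h2 : (1 / ℓ) * Real.log (p / (1 - p)) = Afun p ℓ := by unfold Afun; ring
    linarith
  have hbeta : betaCrit p ℓ = (2 * p - 1) * Afun p ℓ := by
    unfold betaCrit Afun; ring
  rw [hbeta]
  unfold mFun
  exact div_lb hc0 hA0 hlam hden0 hdenle

/-- The value at `λ = 0` is exactly `2p − 1`. -/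
lemma value_at_zero {p ℓ : ℝ} (hℓ : 0 < ℓ) (hp : p ∈ Set.Ioo (1/2 : ℝ) 1) :
    ((0 : ℝ) + betaCrit p ℓ) /
    (Real.sqrt (2 * 0) + (1 / ℓ) * Real.log (4 * p /
      (1 + treeGamma ℓ 0 ^ 2 -
        Real.sqrt ((treeGamma ℓ 0 ^ 2 - 1) ^ 2 +
          4 * (2 * p - 1) ^ 2 * treeGamma ℓ 0 ^ 2)))) = 2 * p - 1 := by
  obtain ⟨hp1, hp2⟩ := hp
  have hγ : treeGamma ℓ 0 = 1 := by
    unfold treeGamma; norm_num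
  have hL0 : 0 < Real.log (p / (1 - p)) :=
    Real.log_pos ((one_lt_div (by linarith)).mpr (by linarith))
  rw [hγ]
  have hsq : Real.sqrt (((1:ℝ) ^ 2 - 1) ^ 2 + 4 * (2 * p - 1) ^ 2 * 1 ^ 2)
      = 2 * (2 * p - 1) := by
    have h1 : ((1:ℝ) ^ 2 - 1) ^ 2 + 4 * (2 * p - 1) ^ 2 * 1 ^ 2
        = (2 * (2 * p - 1)) ^ 2 := by ring
    rw [h1, Real.sqrt_sq (by linarith)]
  rw [hsq]
  have hden : 1 + (1:ℝ) ^ 2 - 2 * (2 * p - 1) = 4 * (1 - p) := by ring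
  rw [hden]
  have harg : 4 * p / (4 * (1 - p)) = p / (1 - p) := by
    rw [div_eq_div_iff (by linarith) (by linarith)]; ring
  rw [harg]
  rw [show Real.sqrt (2 * 0) = 0 by norm_num]
  unfold betaCrit
  have hLne : Real.log (p / (1 - p)) ≠ 0 := ne_of_gt hL0
  field_simp
  ring

/-- For fixed `ℓ > 0`, the speed at the critical reaction rate satisfies
`c*(β_c(p,ℓ), p, ℓ) → 1` as `p → 1⁻` (i.e. as the degree `d = 1/(1−p)` tends to `∞`). -/
theorem stmt16 (ℓ : ℝ) (hℓ : 0 < ℓ) :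
    Tendsto (fun p : ℝ => cstarConst (betaCrit p ℓ) p ℓ)
      (nhdsWithin 1 (Set.Ioo (1 / 2 : ℝ) 1)) (nhds 1) := by
  set l := nhdsWithin (1:ℝ) (Set.Ioo (1 / 2 : ℝ) 1) with hl
  have key : ∀ p ∈ Set.Ioo (1/2 : ℝ) 1,
      2 * (2*p-1) * Afun p ℓ / (2 * Afun p ℓ + (2*p-1)) ≤ cstarConst (betaCrit p ℓ) p ℓ ∧
      cstarConst (betaCrit p ℓ) p ℓ ≤ 2 * p - 1 := by
    intro p hp
    obtain ⟨hp1, hp2⟩ := hp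
    have hA0 : 0 < Afun p ℓ := Afun_pos hℓ ⟨hp1, hp2⟩
    have hc0 : (0:ℝ) < 2 * p - 1 := by linarith
    have hlb : ∀ x ∈ ((fun lam : ℝ => (lam + betaCrit p ℓ) /
        (Real.sqrt (2 * lam) + (1 / ℓ) * Real.log (4 * p /
          (1 + treeGamma ℓ lam ^ 2 -
            Real.sqrt ((treeGamma ℓ lam ^ 2 - 1) ^ 2 +
              4 * (2 * p - 1) ^ 2 * treeGamma ℓ lam ^ 2))))) '' Set.Ici 0),
        mFun p ℓ ≤ x := by
      rintro x ⟨lam, hlam, rfl⟩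
      exact pointwise_lb hℓ ⟨hp1, hp2⟩ hlam
    have hmem : (2 * p - 1 : ℝ) ∈ ((fun lam : ℝ => (lam + betaCrit p ℓ) /
        (Real.sqrt (2 * lam) + (1 / ℓ) * Real.log (4 * p /
          (1 + treeGamma ℓ lam ^ 2 -
            Real.sqrt ((treeGamma ℓ lam ^ 2 - 1) ^ 2 +
              4 * (2 * p - 1) ^ 2 * treeGamma ℓ lam ^ 2))))) '' Set.Ici 0) :=
      ⟨0, Set.self_mem_Ici, value_at_zero hℓ ⟨hp1, hp2⟩⟩
    constructor
    · have h1 : mFun p ℓ ≤ cstarConst (betaCrit p ℓ) p ℓ := le_csInf ⟨_, hmem⟩ hlb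
      have hmid := sqm_sq hc0 hA0
      have hm0 := sqm_nonneg hc0 hA0
      have hmc := sqm_le hc0 hA0
      have h3 : 2 * (2*p-1) * Afun p ℓ / (2 * Afun p ℓ + (2*p-1)) ≤ mFun p ℓ := by
        unfold mFun
        rw [div_le_iff₀ (by linarith)]
        nlinarith [hmid]
      exact h3.trans h1
    · exact csInf_le ⟨mFun p ℓ, hlb⟩ hmem
  -- limits
  have hA : Tendsto (fun p : ℝ => Afun p ℓ) l atTop := by
    have h1 : Tendsto (fun p : ℝ => 1 - p) l (nhdsWithin 0 (Set.Ioi 0)) := by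
      rw [tendsto_nhdsWithin_iff]
      constructor
      · have hcont : Continuous (fun p : ℝ => 1 - p) := by continuity
        have h : Tendsto (fun p : ℝ => 1 - p) l (nhds (1 - 1)) :=
          (hcont.tendsto (1:ℝ)).mono_left nhdsWithin_le_nhds
        rwa [show (1:ℝ) - 1 = 0 by norm_num] at h
      · exact eventually_mem_nhdsWithin.mono (fun p hp => by
          simp only [Set.mem_Ioi]; linarith [hp.2])
    have hinv : Tendsto (fun p : ℝ => (1 - p)⁻¹) l atTop :=
      tendsto_inv_nhdsGT_zero.comp h1
    have hid : Tendsto (fun p : ℝ => p) l (nhds 1) :=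
      tendsto_id.mono_left nhdsWithin_le_nhds
    have hdiv : Tendsto (fun p : ℝ => p / (1 - p)) l atTop := by
      have h := Filter.Tendsto.pos_mul_atTop one_pos hid hinv
      simpa [div_eq_mul_inv] using h
    have hlog : Tendsto (fun p : ℝ => Real.log (p / (1 - p))) l atTop :=
      Real.tendsto_log_atTop.comp hdiv
    exact hlog.atTop_div_const hℓ
  have hc : Tendsto (fun p : ℝ => 2 * p - 1) l (nhds 1) := by
    have hcont : Continuous (fun p : ℝ => 2 * p - 1) := by continuity
    have h : Tendsto (fun p : ℝ => 2 * p - 1) l (nhds (2 * 1 - 1)) :=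
      (hcont.tendsto (1:ℝ)).mono_left nhdsWithin_le_nhds
    rwa [show (2:ℝ) * 1 - 1 = 1 by norm_num] at h
  have hcA : Tendsto (fun p : ℝ => (2 * p - 1) / Afun p ℓ) l (nhds 0) := by
    have h1 : Tendsto (fun p : ℝ => (Afun p ℓ)⁻¹) l (nhds 0) := hA.inv_tendsto_atTop
    have h2 := hc.mul h1
    rw [mul_zero] at h2
    simpa [div_eq_mul_inv] using h2
  have hn : Tendsto (fun p : ℝ => 2 * (2*p-1) * Afun p ℓ / (2 * Afun p ℓ + (2*p-1)))
      l (nhds 1) := by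
    have heq : ∀ᶠ p in l, 2 * (2*p-1) / (2 + (2*p-1) / Afun p ℓ)
        = 2 * (2*p-1) * Afun p ℓ / (2 * Afun p ℓ + (2*p-1)) := by
      refine eventually_mem_nhdsWithin.mono (fun p hp => ?_)
      have hA0 : 0 < Afun p ℓ := Afun_pos hℓ hp
      have hc0 : (0:ℝ) < 2*p-1 := by linarith [hp.1]
      rw [div_eq_div_iff (by positivity) (by positivity)]
      field_simp
    have h1 : Tendsto (fun p : ℝ => 2 * (2*p-1) / (2 + (2*p-1) / Afun p ℓ))
        l (nhds (2 * 1 / (2 + 0))) :=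
      Filter.Tendsto.div (tendsto_const_nhds.mul hc) (tendsto_const_nhds.add hcA)
        (by norm_num)
    rw [show (2 * 1 / (2 + 0) : ℝ) = 1 by norm_num] at h1
    exact h1.congr' heq
  refine tendsto_of_tendsto_of_tendsto_of_le_of_le' hn hc ?_ ?_
  · exact eventually_mem_nhdsWithin.mono (fun p hp => (key p hp).1)
  · exact eventually_mem_nhdsWithin.mono (fun p hp => (key p hp).2)
end

section
/- Let λ > 0, 0 < ℓ̲ ≤ ℓ̄ < ∞ and d̄ ≥ 2. On a probability space, let ℓ₀ be a random variable with ℓ̲ ≤ ℓ₀ ≤ ℓ̄ almost surely, and let ξ be a random variable with values in [1, ∞] satisfying ξ ≥ 1 + (2/d̄)·(e^{2ℓ̲√(2λ)} − 1)/(e^{2ℓ̄√(2λ)} + 1) almost surely. Then E[ ln( 1 + (1 − e^{−2√(2λ)·ℓ₀})/(ξ − 1) ) ] ≤ ln( 1 + (d̄/2)·e^{−2√(2λ)·ℓ̄}·(e^{4√(2λ)·ℓ̄} − 1)/(e^{2√(2λ)·ℓ̲} − 1) ), where the integrand is interpreted as 0 on the event {ξ = ∞}. -/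
/-!
The integrand is increasing in the numerator `1 - e^{-2√(2λ)ℓ₀}`, which is at most
`1 - e^{-2√(2λ)ℓ̄}`, and decreasing in `ξ`, whose distance `ξ - 1` to `1` is a.s. at least the
constant `δ` of the lower bound. Hence it is a.s. at most `log (1 + (1 - e^{-2√(2λ)ℓ̄}) / δ)`,
and with `a = e^{2√(2λ)ℓ̲}`, `b = e^{2√(2λ)ℓ̄}` this constant is the right-hand side, because
`(1 - b⁻¹)(b + 1) = b⁻¹ (b² - 1)`.
-/

open MeasureTheory Real

lemma EReal.coe_le_toReal {r : ℝ} {x : EReal} (h : (r : EReal) ≤ x) (hx : x ≠ ⊤) :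
    r ≤ x.toReal :=
  EReal.coe_le_coe_iff.mp (h.trans (EReal.le_coe_toReal hx))

lemma log_one_add_div_sub_one_le {c N δ y : ℝ} (hδ : 0 < δ) (hc : 0 ≤ c) (hcN : c ≤ N)
    (hy : 1 + δ ≤ y) : log (1 + c / (y - 1)) ≤ log (1 + N / δ) := by
  have hc_div : 0 ≤ c / (y - 1) := div_nonneg hc (by linarith)
  have hle : c / (y - 1) ≤ N / δ := div_le_div₀ (hc.trans hcN) hcN hδ (by linarith)
  exact log_le_log (by linarith) (by linarith)

lemma ite_top_log_one_add_div_toReal_sub_one_mem_Icc {c N δ : ℝ} {x : EReal} (hδ : 0 < δ)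
    (hc : 0 ≤ c) (hcN : c ≤ N) (hx : ((1 + δ : ℝ) : EReal) ≤ x) :
    (if x = ⊤ then 0 else log (1 + c / (x.toReal - 1))) ∈ Set.Icc 0 (log (1 + N / δ)) := by
  split_ifs with htop
  · exact ⟨le_rfl, log_nonneg (by have := div_nonneg (hc.trans hcN) hδ.le; linarith)⟩
  · have hy := EReal.coe_le_toReal hx htop
    exact ⟨log_nonneg (by have := div_nonneg hc (by linarith : 0 ≤ x.toReal - 1); linarith),
      log_one_add_div_sub_one_le hδ hc hcN hy⟩

lemma one_sub_inv_div_eq {a b d : ℝ} (hb : b ≠ 0) :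
    (1 - b⁻¹) / (2 / d * ((a - 1) / (b + 1))) = d / 2 * b⁻¹ * ((b ^ 2 - 1) / (a - 1)) := by
  field_simp
  ring

theorem stmt17_general {Ω : Type*} [MeasurableSpace Ω] (μ : Measure Ω) [IsProbabilityMeasure μ]
    (lam llow lbar : ℝ) (dbar : ℕ)
    (hlam : 0 < lam) (hllow : 0 < llow) (hdbar : 2 ≤ dbar)
    (ℓ₀ : Ω → ℝ) (ξ : Ω → EReal)
    (hℓbd : ∀ᵐ ω ∂μ, llow ≤ ℓ₀ ω ∧ ℓ₀ ω ≤ lbar)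
    (hξbd : ∀ᵐ ω ∂μ, ((1 + (2 / (dbar : ℝ)) *
      ((Real.exp (2 * llow * Real.sqrt (2 * lam)) - 1) /
        (Real.exp (2 * lbar * Real.sqrt (2 * lam)) + 1)) : ℝ) : EReal) ≤ ξ ω) :
    ∫ ω, (if ξ ω = ⊤ then 0 else
        Real.log (1 + (1 - Real.exp (-(2 * Real.sqrt (2 * lam) * ℓ₀ ω))) /
          ((ξ ω).toReal - 1))) ∂μ ≤
      Real.log (1 + ((dbar : ℝ) / 2) * Real.exp (-(2 * Real.sqrt (2 * lam) * lbar)) *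
        ((Real.exp (4 * Real.sqrt (2 * lam) * lbar) - 1) /
          (Real.exp (2 * Real.sqrt (2 * lam) * llow) - 1))) := by
  set s := √(2 * lam)
  have hs : 0 < s := sqrt_pos.mpr (by linarith)
  set δ := 2 / (dbar : ℝ) * ((exp (2 * llow * s) - 1) / (exp (2 * lbar * s) + 1))
  have hδ : 0 < δ := by
    have hd : (0 : ℝ) < dbar := by exact_mod_cast (by omega : 0 < dbar)
    have ha : 1 < exp (2 * llow * s) := one_lt_exp_iff.mpr (by positivity)
    exact mul_pos (by positivity) (div_pos (by linarith) (by positivity))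
  have hK : (1 - exp (-(2 * s * lbar))) / δ = dbar / 2 * exp (-(2 * s * lbar)) *
      ((exp (4 * s * lbar) - 1) / (exp (2 * s * llow) - 1)) := by
    rw [exp_neg, show 4 * s * lbar = 2 * s * lbar + 2 * s * lbar by ring, exp_add]
    convert one_sub_inv_div_eq (exp_pos _).ne' using 4 <;> ring_nf
  rw [← hK]
  set f : Ω → ℝ := fun ω ↦
    if ξ ω = ⊤ then 0 else log (1 + (1 - exp (-(2 * s * ℓ₀ ω))) / ((ξ ω).toReal - 1))
  have hbound : ∀ᵐ ω ∂μ, f ω ∈ Set.Icc 0 (log (1 + (1 - exp (-(2 * s * lbar))) / δ)) := by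
    filter_upwards [hℓbd, hξbd] with ω ⟨hlow, hbar⟩ hξω
    refine ite_top_log_one_add_div_toReal_sub_one_mem_Icc hδ ?_ ?_ hξω
    · linarith [exp_le_one_iff.mpr (by nlinarith : -(2 * s * ℓ₀ ω) ≤ 0)]
    · linarith [exp_le_exp.mpr (by nlinarith : -(2 * s * lbar) ≤ -(2 * s * ℓ₀ ω))]
  calc _ ≤ ∫ _, log (1 + (1 - exp (-(2 * s * lbar))) / δ) ∂μ :=
        integral_mono_of_nonneg (hbound.mono fun _ h ↦ h.1) (integrable_const _)
          (hbound.mono fun _ h ↦ h.2)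
    _ = _ := by simp

/-- Let `λ > 0`, `0 < ℓ̲ ≤ ℓ̄`, `d̄ ≥ 2` an integer, `ℓ₀ ∈ [ℓ̲, ℓ̄]` a.s., and `ξ` a
`[1,∞]`-valued random variable with `ξ ≥ 1 + (2/d̄)(e^{2ℓ̲√(2λ)}−1)/(e^{2ℓ̄√(2λ)}+1)` a.s.
Then `E[ln(1 + (1 − e^{−2√(2λ)ℓ₀})/(ξ − 1))] ≤
ln(1 + (d̄/2)·e^{−2√(2λ)ℓ̄}·(e^{4√(2λ)ℓ̄} − 1)/(e^{2√(2λ)ℓ̲} − 1))`, the integrand being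
interpreted as `0` where `ξ = ∞`. -/
theorem stmt17 {Ω : Type*} [MeasurableSpace Ω] (μ : Measure Ω) [IsProbabilityMeasure μ]
    (lam llow lbar : ℝ) (dbar : ℕ)
    (hlam : 0 < lam) (hllow : 0 < llow) (hlord : llow ≤ lbar) (hdbar : 2 ≤ dbar)
    (ℓ₀ : Ω → ℝ) (ξ : Ω → EReal)
    (hℓmeas : Measurable ℓ₀) (hξmeas : Measurable ξ)
    (hℓbd : ∀ᵐ ω ∂μ, llow ≤ ℓ₀ ω ∧ ℓ₀ ω ≤ lbar)
    (hξ1 : ∀ᵐ ω ∂μ, (1 : EReal) ≤ ξ ω)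
    (hξbd : ∀ᵐ ω ∂μ, ((1 + (2 / (dbar : ℝ)) *
      ((Real.exp (2 * llow * Real.sqrt (2 * lam)) - 1) /
        (Real.exp (2 * lbar * Real.sqrt (2 * lam)) + 1)) : ℝ) : EReal) ≤ ξ ω) :
    ∫ ω, (if ξ ω = ⊤ then 0 else
        Real.log (1 + (1 - Real.exp (-(2 * Real.sqrt (2 * lam) * ℓ₀ ω))) /
          ((ξ ω).toReal - 1))) ∂μ ≤
      Real.log (1 + ((dbar : ℝ) / 2) * Real.exp (-(2 * Real.sqrt (2 * lam) * lbar)) *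
        ((Real.exp (4 * Real.sqrt (2 * lam) * lbar) - 1) /
          (Real.exp (2 * Real.sqrt (2 * lam) * llow) - 1))) :=
  stmt17_general μ lam llow lbar dbar hlam hllow hdbar ℓ₀ ξ hℓbd hξbd
end

section
/- Fix ζ ∈ [0,1) and γ ∈ (1,∞), and define f(θ) := arctan( (ζγ² + tan θ)/(γ² + ζ·tan θ) ) for θ ∈ [0, π/2). Then f is differentiable on [0, π/2) and its derivative is given by f′(θ) = γ²(1 − ζ²) / ( (ζ² + 1)·(γ⁴·cos²θ + sin²θ) + 2ζγ²·sin(2θ) ), which is strictly positive for every θ ∈ [0, π/2). -/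
open Real

/-- For `ζ ∈ [0,1)` and `γ ∈ (1,∞)`, the map
`f(θ) = arctan((ζγ² + tan θ)/(γ² + ζ·tan θ))` is differentiable at every `θ ∈ [0, π/2)`
with derivative `f′(θ) = γ²(1−ζ²)/((ζ²+1)(γ⁴cos²θ + sin²θ) + 2ζγ²sin(2θ))`, which is
strictly positive. -/
theorem stmt19 (ζ γ : ℝ) (hζ0 : 0 ≤ ζ) (hζ1 : ζ < 1) (hγ : 1 < γ) :
    ∀ θ : ℝ, 0 ≤ θ → θ < π / 2 →
      HasDerivAt (fun θ' => arctan ((ζ * γ ^ 2 + tan θ') / (γ ^ 2 + ζ * tan θ')))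
        (γ ^ 2 * (1 - ζ ^ 2) /
          ((ζ ^ 2 + 1) * (γ ^ 4 * cos θ ^ 2 + sin θ ^ 2) + 2 * ζ * γ ^ 2 * sin (2 * θ))) θ ∧
      0 < γ ^ 2 * (1 - ζ ^ 2) /
          ((ζ ^ 2 + 1) * (γ ^ 4 * cos θ ^ 2 + sin θ ^ 2) + 2 * ζ * γ ^ 2 * sin (2 * θ)) := by
  intro θ hθ0 hθ1
  have hc : 0 < cos θ := Real.cos_pos_of_mem_Ioo ⟨by linarith [Real.pi_pos], hθ1⟩
  have hs : 0 ≤ sin θ := Real.sin_nonneg_of_nonneg_of_le_pi hθ0 (by linarith [Real.pi_pos])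
  have hγ0 : 0 < γ := by linarith
  have ht0 : 0 ≤ tan θ := by
    rw [Real.tan_eq_sin_div_cos]; positivity
  have hden : 0 < γ ^ 2 + ζ * tan θ := by positivity
  -- denominator of the target
  have hpyth := Real.sin_sq_add_cos_sq θ
  have hD : 0 < (ζ ^ 2 + 1) * (γ ^ 4 * cos θ ^ 2 + sin θ ^ 2) + 2 * ζ * γ ^ 2 * sin (2 * θ) := by
    rw [Real.sin_two_mul]
    have h1 : 0 < (ζ ^ 2 + 1) * (γ ^ 4 * cos θ ^ 2 + sin θ ^ 2) := by positivity
    have h2 : 0 ≤ 2 * ζ * γ ^ 2 * (2 * sin θ * cos θ) := by positivity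
    linarith
  constructor
  · have h1 : HasDerivAt tan (1 / cos θ ^ 2) θ := Real.hasDerivAt_tan hc.ne'
    have hnum : HasDerivAt (fun θ' => ζ * γ ^ 2 + tan θ') (1 / cos θ ^ 2) θ := by
      exact ((hasDerivAt_const θ (ζ * γ ^ 2)).add h1).congr_deriv (by ring)
    have hden' : HasDerivAt (fun θ' => γ ^ 2 + ζ * tan θ') (ζ * (1 / cos θ ^ 2)) θ := by
      exact ((hasDerivAt_const θ (γ ^ 2)).add (h1.const_mul ζ)).congr_deriv (by ring)
    have h2 := hnum.div hden' hden.ne'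
    have h3 := (Real.hasDerivAt_arctan ((ζ * γ ^ 2 + tan θ) / (γ ^ 2 + ζ * tan θ))).comp θ h2
    refine HasDerivAt.congr_deriv h3 ?_
    symm
    rw [Real.tan_eq_sin_div_cos, Real.sin_two_mul]
    have h1s : 1 + (sin θ / cos θ) ^ 2 ≠ 0 := by positivity
    have hd2 : γ ^ 2 + ζ * (sin θ / cos θ) ≠ 0 := by
      have : 0 < γ ^ 2 + ζ * (sin θ / cos θ) := by positivity
      exact this.ne'
    have h1p : (1 : ℝ) + ((ζ * γ ^ 2 + sin θ / cos θ) / (γ ^ 2 + ζ * (sin θ / cos θ))) ^ 2 ≠ 0 := by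
      positivity
    rw [Real.sin_two_mul] at hD
    field_simp
    ring_nf
  · have hnum : 0 < γ ^ 2 * (1 - ζ ^ 2) :=
      mul_pos (by positivity) (by nlinarith)
    exact div_pos hnum hD
end
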